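/- arXiv:1404.5752 — 2 statements merged into one kernel-verified Lean document; each statement's English description precedes it below -/
import Mathlib

section
/- Degree equals weight (Brundan–Kleshchev–Wang degree versus flow weight). For every flow f on a valid ladder presentation P (parameters n, ℓ, m) one has deg_BKW(ι(P,f)) = wt(f). -/
open scoped Classical

namespace SlnWeb

noncomputable section

/-- `p r` is the length of the `r`-th row (0-indexed) of a Young diagram. -/
def IsPartition (p : ℕ → ℕ) : Prop :=
  Antitone p ∧ ∃ N, p N = 0

/-- The 0-indexed cell `(r, c)` lies in the Young diagram of `p`. -/
def InDiag (p : ℕ → ℕ) (r c : ℕ) : Prop :=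
  c < p r

/-- Residue (with shift `ℓ`) of the 0-indexed cell `(r, c)`; for the
corresponding 1-indexed cell `(r+1, c+1)` this is `(c+1) - (r+1) + ℓ`. -/
def resOf (ℓ : ℕ) (r c : ℕ) : ℤ :=
  (c : ℤ) - (r : ℤ) + (ℓ : ℤ)

/-- `(r, c)` (0-indexed) is an addable cell of `p`. -/
def IsAddableCell (p : ℕ → ℕ) (r c : ℕ) : Prop :=
  c = p r ∧ (r = 0 ∨ p r < p (r - 1))

/-- `(r, c)` (0-indexed) is a removable cell of `p`. -/
def IsRemovableCell (p : ℕ → ℕ) (r c : ℕ) : Prop :=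
  c + 1 = p r ∧ p (r + 1) < p r

/-- Add to `p` its (unique) addable cell of residue `k`, if there is one. -/
def addRes (ℓ : ℕ) (p : ℕ → ℕ) (k : ℤ) : ℕ → ℕ :=
  if h : ∃ r, (r = 0 ∨ p r < p (r - 1)) ∧ (p r : ℤ) - (r : ℤ) + (ℓ : ℤ) = k then
    Function.update p h.choose (p h.choose + 1)
  else p

/-- A multitableau: `shape t r` is the length of the `r`-th row (0-indexed) of
the `t`-th component (components are indexed by `t ∈ {1,…,n}`), and
`entry t r c` is the entry of the 0-indexed cell `(r, c)` of the `t`-th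
component; everything is normalised to `0` outside of the diagrams. -/
structure MultiTableau where
  shape : ℕ → ℕ → ℕ
  entry : ℕ → ℕ → ℕ → ℕ

/-- A standard `n`-multitableau with entries in `{1,…,s}` (residue shift `ℓ`):
each component is a partition, components are normalised to be empty outside
of `{1,…,n}`, entries lie in `{1,…,s}` and are normalised to `0` outside the
diagram, entries strictly increase along rows and down columns, no entry is
repeated inside a single component, and all nodes carrying the same entry have
the same residue. -/
def IsStandard (n ℓ s : ℕ) (M : MultiTableau) : Prop :=
  (∀ t, IsPartition (M.shape t)) ∧
  (∀ t, (t = 0 ∨ n < t) → ∀ r, M.shape t r = 0) ∧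
  (∀ t r c, InDiag (M.shape t) r c → 1 ≤ M.entry t r c ∧ M.entry t r c ≤ s) ∧
  (∀ t r c, ¬ InDiag (M.shape t) r c → M.entry t r c = 0) ∧
  (∀ t r c c', c < c' → InDiag (M.shape t) r c' → M.entry t r c < M.entry t r c') ∧
  (∀ t r r' c, r < r' → InDiag (M.shape t) r' c → M.entry t r c < M.entry t r' c) ∧
  (∀ t r c r' c', InDiag (M.shape t) r c → InDiag (M.shape t) r' c' →
    M.entry t r c = M.entry t r' c' → r = r' ∧ c = c') ∧
  (∀ t r c t' r' c', InDiag (M.shape t) r c → InDiag (M.shape t') r' c' →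
    M.entry t r c = M.entry t' r' c' → resOf ℓ r c = resOf ℓ r' c')

/-- A ladder presentation of length `s` for the parameters `n`, `ℓ`, `m`:
the `r`-th step is `F_{i_r}^{(j_r)}` with `i_r = res r ∈ {1,…,m-1}` and
`j_r = mult r ∈ {1,…,n}`. -/
structure LadderPresentation (n ℓ m s : ℕ) where
  res : Fin s → ℕ
  mult : Fin s → ℕ
  res_pos : ∀ r, 1 ≤ res r
  res_lt : ∀ r, res r < m
  mult_pos : ∀ r, 1 ≤ mult r
  mult_le : ∀ r, mult r ≤ n

/-- The weight sequence `k⁽⁰⁾, k⁽¹⁾, …` of a ladder presentation; positions `p`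
are 1-indexed, `k⁽⁰⁾ = (n^ℓ)` and `k⁽ʳ⁾ = k⁽ʳ⁻¹⁾ - j_r·e_{i_r} + j_r·e_{i_r+1}`. -/
def wtSeq {n ℓ m s : ℕ} (P : LadderPresentation n ℓ m s) : ℕ → ℕ → ℤ
  | 0, p => if 1 ≤ p ∧ p ≤ ℓ then (n : ℤ) else 0
  | r + 1, p =>
    if h : r < s then
      wtSeq P r p - (if p = P.res ⟨r, h⟩ then (P.mult ⟨r, h⟩ : ℤ) else 0) +
        (if p = P.res ⟨r, h⟩ + 1 then (P.mult ⟨r, h⟩ : ℤ) else 0)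
    else wtSeq P r p

/-- A ladder presentation is valid if every entry of every weight in its weight
sequence lies in `{0,…,n}`. -/
def IsValid {n ℓ m s : ℕ} (P : LadderPresentation n ℓ m s) : Prop :=
  ∀ r, r ≤ s → ∀ p, 1 ≤ p → p ≤ m → 0 ≤ wtSeq P r p ∧ wtSeq P r p ≤ (n : ℤ)

/-- A flow on a (valid) ladder presentation `P`.  `S r p ⊆ {1,…,n}` is the flow
label of the `p`-th boundary point after `r` steps (normalised to `∅` outside
`p ∈ {1,…,m}`), and `T r` is the flow label of the rung of the `r`-th ladder. -/
structure LadderFlow {n ℓ m s : ℕ} (P : LadderPresentation n ℓ m s) where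
  S : Fin (s + 1) → ℕ → Finset ℕ
  T : Fin s → Finset ℕ
  S_sub : ∀ r p, S r p ⊆ Finset.Icc 1 n
  S_outside : ∀ r p, (p = 0 ∨ m < p) → S r p = ∅
  S_card : ∀ r p, 1 ≤ p → p ≤ m → ((S r p).card : ℤ) = wtSeq P r.val p
  S_init : ∀ p, 1 ≤ p → p ≤ m → S 0 p = if p ≤ ℓ then Finset.Icc 1 n else ∅
  T_sub : ∀ r : Fin s, T r ⊆ S r.castSucc (P.res r)
  T_card : ∀ r : Fin s, (T r).card = P.mult r
  T_disj : ∀ r : Fin s, Disjoint (T r) (S r.castSucc (P.res r + 1))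
  S_step_res : ∀ r : Fin s, S r.succ (P.res r) = S r.castSucc (P.res r) \ T r
  S_step_res1 : ∀ r : Fin s, S r.succ (P.res r + 1) = S r.castSucc (P.res r + 1) ∪ T r
  S_step_other : ∀ r : Fin s, ∀ p, p ≠ P.res r → p ≠ P.res r + 1 →
    S r.succ p = S r.castSucc p

/-- Add, for every component `t ∈ Tset`, the (unique) addable cell of residue
`k` of that component, giving each of the new cells the entry `e`. -/
def stepAdd (ℓ : ℕ) (k : ℤ) (e : ℕ) (Tset : Finset ℕ) (M : MultiTableau) :
    MultiTableau where
  shape := fun t => if t ∈ Tset then addRes ℓ (M.shape t) k else M.shape t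
  entry := fun t r c =>
    if t ∈ Tset ∧ M.shape t r ≤ c ∧ c < addRes ℓ (M.shape t) k r then e
    else M.entry t r c

/-- The sequence of intermediate multitableaux built by the filling map `ι`:
at step `r` (0-indexed), for each `t ∈ T r`, the unique addable node of residue
`i_r` is added to the `t`-th component, with entry `r + 1`. -/
def iotaAux {n ℓ m s : ℕ} (P : LadderPresentation n ℓ m s) (f : LadderFlow P) :
    ℕ → MultiTableau
  | 0 => ⟨fun _ _ => 0, fun _ _ _ => 0⟩
  | r + 1 =>
    if h : r < s then
      stepAdd ℓ (P.res ⟨r, h⟩ : ℤ) (r + 1) (f.T ⟨r, h⟩) (iotaAux P f r)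
    else iotaAux P f r

/-- The filling map `ι`. -/
def iotaMap {n ℓ m s : ℕ} (P : LadderPresentation n ℓ m s) (f : LadderFlow P) :
    MultiTableau :=
  iotaAux P f s

/-- Every entry of `{1,…,s}` occurs in `M`. -/
def AllEntriesOccur (s : ℕ) (M : MultiTableau) : Prop :=
  ∀ e, 1 ≤ e → e ≤ s → ∃ t r c, InDiag (M.shape t) r c ∧ M.entry t r c = e

/-- All nodes of `M` have residue in `{1,…,m-1}`. -/
def ResInRange (ℓ m : ℕ) (M : MultiTableau) : Prop :=
  ∀ t r c, InDiag (M.shape t) r c → 1 ≤ resOf ℓ r c ∧ resOf ℓ r c ≤ (m : ℤ) - 1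

/-- `(P, f)` is the image of the multitableau `M` under the growth map `g`:
`i_r` is the common residue of the nodes of `M` with entry `r`, and `T r` is
the set of components of `M` containing a node with entry `r` (the remaining
data of `f`, i.e. the tuples `S`, is forced by the flow conditions, and
`j_r = |T r|` is forced by the flow condition `T_card`). -/
def GrowthData {n ℓ m s : ℕ} (M : MultiTableau) (P : LadderPresentation n ℓ m s)
    (f : LadderFlow P) : Prop :=
  (∀ r : Fin s, ∀ t r' c, InDiag (M.shape t) r' c → M.entry t r' c = r.val + 1 →
    (P.res r : ℤ) = resOf ℓ r' c) ∧
  (∀ r : Fin s, ∀ t,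
    t ∈ f.T r ↔ ∃ r' c, InDiag (M.shape t) r' c ∧ M.entry t r' c = r.val + 1)

/-- `#{(a,b) ∈ A × B : a < b}`. -/
def inv2 (A B : Finset ℕ) : ℕ :=
  ((A ×ˢ B).filter fun ab => ab.1 < ab.2).card

/-- The weight of a flow:
`wt(f) = Σ_r ( inv(S⁽ʳ⁾_{i_r}, T_r) − inv(S⁽ʳ⁻¹⁾_{i_r+1}, T_r) )`. -/
def wtFlow {n ℓ m s : ℕ} (P : LadderPresentation n ℓ m s) (f : LadderFlow P) : ℤ :=
  ∑ r : Fin s,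
    ((inv2 (f.S r.succ (P.res r)) (f.T r) : ℤ) -
      (inv2 (f.S r.castSucc (P.res r + 1)) (f.T r) : ℤ))

/-- The components of `M` (among `{1,…,n}`) containing a node with entry `j`. -/
def compsWith (n : ℕ) (M : MultiTableau) (j : ℕ) : Finset ℕ :=
  (Finset.Icc 1 n).filter fun t => ∃ r c, InDiag (M.shape t) r c ∧ M.entry t r c = j

/-- The shape of `M` with all entries `> j` removed, where moreover in the
components outside `Keep` the nodes with entry `j` are removed as well. -/
def shapeTrunc (M : MultiTableau) (j : ℕ) (Keep : Finset ℕ) : ℕ → ℕ → ℕ :=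
  fun t r =>
    ((Finset.range (M.shape t r)).filter fun c =>
      M.entry t r c ≤ (if t ∈ Keep then j else j - 1)).card

/-- The row of the node with entry `j` in component `t` of `M`. -/
def nodeRow (M : MultiTableau) (j t : ℕ) : ℕ :=
  if h : ∃ r c, InDiag (M.shape t) r c ∧ M.entry t r c = j then h.choose else 0

/-- The column of the node with entry `j` in component `t` of `M`. -/
def nodeCol (M : MultiTableau) (j t : ℕ) : ℕ :=
  if h : ∃ r c, InDiag (M.shape t) r c ∧ M.entry t r c = j then
    h.choose_spec.choose
  else 0

/-- The number of addable nodes of `sh` of residue `ρ` lying strictly after the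
position `(t, r)` in the order `⪯` (at most one addable node of a given residue
per component). -/
def cntAddAfter (n ℓ : ℕ) (sh : ℕ → ℕ → ℕ) (ρ : ℤ) (t r : ℕ) : ℕ :=
  ((Finset.Icc 1 n).filter fun t' => ∃ r' c', IsAddableCell (sh t') r' c' ∧
    resOf ℓ r' c' = ρ ∧ (t' < t ∨ (t' = t ∧ r < r'))).card

/-- The number of removable nodes of `sh` of residue `ρ` lying strictly after
the position `(t, r)` in the order `⪯`. -/
def cntRemAfter (n ℓ : ℕ) (sh : ℕ → ℕ → ℕ) (ρ : ℤ) (t r : ℕ) : ℕ :=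
  ((Finset.Icc 1 n).filter fun t' => ∃ r' c', IsRemovableCell (sh t') r' c' ∧
    resOf ℓ r' c' = ρ ∧ (t' < t ∨ (t' = t ∧ r < r'))).card

/-- The contribution `deg(Tʲ)` of the entry `j` to the Brundan–Kleshchev–Wang
degree of the standard multitableau `M`: listing the nodes with entry `j` as
`N₁ ≺ ⋯ ≺ N_t` (i.e. by decreasing component index), it is
`Σ_p (A_p − R_p) − t(t−1)/2`, where `A_p` (resp. `R_p`) is the number of
addable (resp. removable) nodes of the residue of `N_p`, strictly after `N_p`,
of the multipartition underlying `Tʲ` with the nodes `N_{p+1},…,N_t` removed. -/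
def degStep (n ℓ : ℕ) (M : MultiTableau) (j : ℕ) : ℤ :=
  (∑ t ∈ compsWith n M j,
    ((cntAddAfter n ℓ (shapeTrunc M j ((compsWith n M j).filter fun t' => t ≤ t'))
        (resOf ℓ (nodeRow M j t) (nodeCol M j t)) t (nodeRow M j t) : ℤ) -
      (cntRemAfter n ℓ (shapeTrunc M j ((compsWith n M j).filter fun t' => t ≤ t'))
        (resOf ℓ (nodeRow M j t) (nodeCol M j t)) t (nodeRow M j t) : ℤ))) -
  (((compsWith n M j).card * ((compsWith n M j).card - 1) / 2 : ℕ) : ℤ)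

/-- The Brundan–Kleshchev–Wang degree of a standard multitableau with entries
in `{1,…,s}`. -/
def degBKW (n ℓ s : ℕ) (M : MultiTableau) : ℤ :=
  ∑ j ∈ Finset.Icc 1 s, degStep n ℓ M j

/-- `M` has the residue sequence `((i_1,j_1),…,(i_s,j_s))` recorded by `P`:
for each `r`, exactly `j_r` nodes of `M` carry the entry `r` (equivalently,
under standardness, `j_r` components contain the entry `r`) and they all have
residue `i_r`. -/
def HasResSeq {n ℓ m s : ℕ} (P : LadderPresentation n ℓ m s) (M : MultiTableau) :
    Prop :=
  ∀ r : Fin s,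
    (compsWith n M (r.val + 1)).card = P.mult r ∧
    ∀ t r' c, InDiag (M.shape t) r' c → M.entry t r' c = r.val + 1 →
      resOf ℓ r' c = (P.res r : ℤ)

/-- The multipartition `λ(S)` determined by a boundary tuple `S`: writing
`p_1 < ⋯ < p_ℓ` for the elements of `{ p ∈ {1,…,m} : t ∈ S p }`, the `r`-th
part (1-indexed) of its `t`-th component is `p_{ℓ+1−r} − (ℓ+1−r)`. -/
def shapeOfTuple (ℓ m : ℕ) (Sb : ℕ → Finset ℕ) : ℕ → ℕ → ℕ :=
  fun t r =>
    if r < ℓ then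
      (((Finset.Icc 1 m).filter fun p => t ∈ Sb p).sort (· ≤ ·)).getD (ℓ - 1 - r) 0 -
        (ℓ - r)
    else 0

/-!
A component of a multipartition with at most `ℓ` rows is encoded by a beta-set `B ⊆ {1,…,m}`
of size `ℓ`; for the `t`-th component of `ι(P, f)` after `r` steps this is `{p : t ∈ S⁽ʳ⁾_p}`.
A node of residue `i` is addable iff `i ∈ B, i + 1 ∉ B`, removable iff `i ∉ B, i + 1 ∈ B`, and
adding it moves the bead from `i` to `i + 1`, which is exactly how the flow changes `S⁽ʳ⁾` on
the components in `T_r`. So, for the node added at step `r` to component `t ∈ T_r`, the addable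
and removable nodes of residue `i_r` after it are those of the components `t' < t` with
`t' ∈ S⁽ʳ⁻¹⁾_{i_r} ∖ S⁽ʳ⁻¹⁾_{i_r+1}`, resp. `t' ∈ S⁽ʳ⁻¹⁾_{i_r+1} ∖ S⁽ʳ⁻¹⁾_{i_r}`, while its own
component has none. Summing over `t ∈ T_r` and writing `|T_r|(|T_r|-1)/2` as
`Σ_{t ∈ T_r} #{t' ∈ T_r : t' < t}` gives `inv(S⁽ʳ⁾_{i_r}, T_r) − inv(S⁽ʳ⁻¹⁾_{i_r+1}, T_r)`.
-/

open Finset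

lemma card_eq_card_erase_add_ite {α : Type*} [DecidableEq α] (s : Finset α) (a : α) :
    #s = #(s.erase a) + if a ∈ s then 1 else 0 := by
  split_ifs with h
  · exact (card_erase_add_one h).symm
  · rw [erase_eq_of_notMem h, add_zero]

lemma filter_sdiff_eq {α : Type*} [DecidableEq α] (s t : Finset α) (p : α → Prop)
    [DecidablePred p] : (s \ t).filter p = s.filter p \ t.filter p := by
  ext
  simp only [mem_filter, mem_sdiff]
  tauto

lemma card_filter_sdiff_sub_card_filter_sdiff {α : Type*} [DecidableEq α] (X Y : Finset α)
    (p : α → Prop) [DecidablePred p] :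
    (#((X \ Y).filter p) : ℤ) - #((Y \ X).filter p) = #(X.filter p) - #(Y.filter p) := by
  have h1 := card_sdiff_add_card_inter (X.filter p) (Y.filter p)
  have h2 := card_sdiff_add_card_inter (Y.filter p) (X.filter p)
  rw [inter_comm] at h2
  rw [filter_sdiff_eq, filter_sdiff_eq]
  omega

lemma sum_card_filter_lt (T : Finset ℕ) : ∑ t ∈ T, #(T.filter (· < t)) = (#T).choose 2 := by
  induction T using Finset.induction_on_max with
  | empty => simp
  | insert a T hlt ih =>
    have ha : a ∉ T := fun h => lt_irrefl a (hlt a h)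
    have below : (insert a T).filter (· < a) = T := by
      rw [filter_insert, if_neg (lt_irrefl a), filter_true_of_mem hlt]
    have above : ∀ t ∈ T, (insert a T).filter (· < t) = T.filter (· < t) := fun t ht => by
      rw [filter_insert, if_neg (not_lt.2 (hlt t ht).le)]
    rw [sum_insert ha, below, sum_congr rfl fun t ht => congrArg card (above t ht), ih,
      card_insert_of_notMem ha, Nat.choose_succ_succ', Nat.choose_one_right, add_comm]

lemma inv2_eq_sum (A T : Finset ℕ) : inv2 A T = ∑ t ∈ T, #(A.filter (· < t)) := by
  rw [inv2, card_filter, sum_product, sum_comm]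
  exact sum_congr rfl fun t _ => (card_filter _ _).symm

lemma sum_Icc_one_eq_sum_fin {M : Type*} [AddCommMonoid M] (s : ℕ) (g : ℕ → M) :
    ∑ j ∈ Icc 1 s, g j = ∑ r : Fin s, g ((r : ℕ) + 1) := by
  rw [Fin.sum_univ_eq_sum_range (fun r => g (r + 1)), range_eq_Ico, sum_Ico_add', zero_add,
    Ico_add_one_right_eq_Icc]

lemma injective_sub_self_of_antitone {p : ℕ → ℕ} (hp : Antitone p) :
    Function.Injective fun q => (p q : ℤ) - q := by
  intro a b h
  simp only at h
  rcases lt_trichotomy a b with hab | rfl | hab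
  · have := hp hab.le
    omega
  · rfl
  · have := hp hab.le
    omega

lemma le_addRes (ℓ : ℕ) (p : ℕ → ℕ) (k : ℤ) (q : ℕ) : p q ≤ addRes ℓ p k q := by
  unfold addRes
  split_ifs with h
  · rcases eq_or_ne q h.choose with rfl | hq
    · simp
    · simp [hq]
  · exact le_rfl

lemma addRes_eq_update {ℓ q : ℕ} {p : ℕ → ℕ} (hp : Antitone p) (hq : q = 0 ∨ p q < p (q - 1)) :
    addRes ℓ p ((p q : ℤ) - q + ℓ) = Function.update p q (p q + 1) := by
  have hex : ∃ r, (r = 0 ∨ p r < p (r - 1)) ∧ (p r : ℤ) - r + ℓ = (p q : ℤ) - q + ℓ :=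
    ⟨q, hq, rfl⟩
  have hchoose : hex.choose = q := by
    apply injective_sub_self_of_antitone hp
    have := hex.choose_spec.2
    dsimp only
    omega
  rw [addRes, dif_pos hex, hchoose]

def numAbove (B : Finset ℕ) (p : ℕ) : ℕ := #(B.filter (p < ·))

/-- Row `q` (0-indexed) of the partition with beta-set `B ⊆ {1,…,m}`: the number of gaps below
the bead that has exactly `q` beads above it. -/
def betaRow (m : ℕ) (B : Finset ℕ) (q : ℕ) : ℕ :=
  #((Icc 1 m).filter fun x => x ∉ B ∧ q < numAbove B x)

section BetaSet

variable {m : ℕ} {B : Finset ℕ}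

lemma numAbove_antitone (B : Finset ℕ) : Antitone (numAbove B) :=
  fun _ _ h => card_le_card (monotone_filter_right _ fun _ _ hx => h.trans_lt hx)

lemma numAbove_le_card (B : Finset ℕ) (p : ℕ) : numAbove B p ≤ #B := card_filter_le _ _

lemma numAbove_lt_card {p : ℕ} (hp : p ∈ B) : numAbove B p < #B :=
  card_lt_card (filter_ssubset.2 ⟨p, hp, lt_irrefl p⟩)

lemma numAbove_lt_of_mem {x p : ℕ} (hx : x ∈ B) (h : p < x) :
    numAbove B x < numAbove B p :=
  card_lt_card <| (ssubset_iff_of_subset (monotone_filter_right _ fun _ _ hy => h.trans hy)).2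
    ⟨x, mem_filter.2 ⟨hx, h⟩, by simp⟩

lemma numAbove_strictAntiOn : StrictAntiOn (numAbove B) B :=
  fun _ _ _ hy hxy => numAbove_lt_of_mem hy hxy

lemma exists_numAbove_eq {q : ℕ} (hq : q < #B) : ∃ p ∈ B, numAbove B p = q := by
  obtain ⟨p, hp, hpq⟩ := surj_on_of_inj_on_of_card_le (t := range #B) (fun p _ => numAbove B p)
    (fun _ hp => mem_range.2 (numAbove_lt_card hp))
    (fun _ _ ha hb h => numAbove_strictAntiOn.injOn ha hb h) (by simp) q (mem_range.2 hq)
  exact ⟨p, hp, hpq.symm⟩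

lemma numAbove_of_succ_not_mem {i : ℕ} (h : i + 1 ∉ B) : numAbove B i = numAbove B (i + 1) := by
  unfold numAbove
  congr 1
  refine filter_congr fun x hx => ?_
  have : x ≠ i + 1 := by rintro rfl; exact h hx
  omega

lemma numAbove_of_succ_mem {i : ℕ} (h : i + 1 ∈ B) : numAbove B i = numAbove B (i + 1) + 1 := by
  unfold numAbove
  rw [← card_insert_of_notMem (s := B.filter (i + 1 < ·)) (a := i + 1) (by simp)]
  congr 1
  ext x
  simp only [mem_filter, mem_insert]
  constructor
  · rintro ⟨hx, hix⟩
    by_cases hx' : x = i + 1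
    exacts [Or.inl hx', Or.inr ⟨hx, by omega⟩]
  · rintro (rfl | ⟨hx, hix⟩)
    exacts [⟨h, by omega⟩, ⟨hx, by omega⟩]

lemma card_eq_card_filter_lt_add_numAbove {p : ℕ} (hp : p ∈ B) :
    #B = #(B.filter (· < p)) + 1 + numAbove B p := by
  rw [← card_filter_add_card_filter_not (s := B) (· < p)]
  have : B.filter (¬ · < p) = insert p (B.filter (p < ·)) := by
    ext x
    simp only [mem_filter, mem_insert]
    constructor
    · rintro ⟨hx, hxp⟩
      by_cases hx' : x = p
      exacts [Or.inl hx', Or.inr ⟨hx, by omega⟩]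
    · rintro (rfl | ⟨hx, hpx⟩)
      exacts [⟨hp, lt_irrefl _⟩, ⟨hx, by omega⟩]
  rw [this, card_insert_of_notMem (by simp), numAbove]
  ring

lemma betaRow_antitone (m : ℕ) (B : Finset ℕ) : Antitone (betaRow m B) :=
  fun _ _ h => card_le_card (monotone_filter_right _ fun _ _ hx => ⟨hx.1, h.trans_lt hx.2⟩)

lemma betaRow_eq_zero {q : ℕ} (h : #B ≤ q) : betaRow m B q = 0 := by
  rw [betaRow, card_eq_zero, filter_eq_empty_iff]
  exact fun x _ hx => absurd (hx.2.trans_le (numAbove_le_card B x)) (by omega)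

lemma betaRow_add_card (hB : B ⊆ Icc 1 m) {p : ℕ} (hp : p ∈ B) :
    betaRow m B (numAbove B p) + #B = p + numAbove B p := by
  have hpm := mem_Icc.1 (hB hp)
  have gaps : (Icc 1 m).filter (fun x => x ∉ B ∧ numAbove B p < numAbove B x) =
      (Ico 1 p).filter (· ∉ B) := by
    ext x
    simp only [mem_filter, mem_Icc, mem_Ico]
    constructor
    · rintro ⟨hx, hxB, hlt⟩
      exact ⟨⟨hx.1, (numAbove_antitone B).reflect_lt hlt⟩, hxB⟩
    · rintro ⟨hx, hxB⟩
      exact ⟨⟨hx.1, by omega⟩, hxB, numAbove_lt_of_mem hp hx.2⟩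
  have beads : B.filter (· < p) = (Ico 1 p).filter (· ∈ B) := by
    ext x
    simp only [mem_filter, mem_Ico]
    constructor
    · rintro ⟨hx, hxp⟩
      exact ⟨⟨(mem_Icc.1 (hB hx)).1, hxp⟩, hx⟩
    · rintro ⟨hx, hxB⟩
      exact ⟨hxB, hx.2⟩
  have split := card_filter_add_card_filter_not (s := Ico 1 p) (· ∈ B)
  rw [Nat.card_Ico] at split
  rw [betaRow, gaps, card_eq_card_filter_lt_add_numAbove hp, beads]
  omega

lemma betaRow_Icc_one (m ℓ : ℕ) : betaRow m (Icc 1 ℓ) = 0 := by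
  funext q
  rw [betaRow, Pi.zero_apply, card_eq_zero, filter_eq_empty_iff]
  rintro x hxm ⟨hx, hq⟩
  have : (Icc 1 ℓ).filter (x < ·) = ∅ := by
    rw [filter_eq_empty_iff]
    intro y hy
    simp only [mem_Icc] at hxm hx hy
    omega
  rw [numAbove, this, card_empty] at hq
  omega

lemma resOf_betaRow (hB : B ⊆ Icc 1 m) {p : ℕ} (hp : p ∈ B) :
    resOf #B (numAbove B p) (betaRow m B (numAbove B p)) = p := by
  have := betaRow_add_card hB hp
  rw [resOf]
  omega

lemma isAddableCell_betaRow (hB : B ⊆ Icc 1 m) {i : ℕ} (hi : i ∈ B) (hi1 : i + 1 ∉ B) :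
    IsAddableCell (betaRow m B) (numAbove B i) (betaRow m B (numAbove B i)) := by
  refine ⟨rfl, ?_⟩
  rcases Nat.eq_zero_or_pos (numAbove B i) with h0 | hpos
  · exact Or.inl h0
  have hlt : numAbove B i - 1 < #B := by
    have := numAbove_lt_card hi
    omega
  obtain ⟨p, hp, hpq⟩ := exists_numAbove_eq hlt
  have hip : i + 1 < p := by
    have : i < p := (numAbove_antitone B).reflect_lt (by omega)
    have : p ≠ i + 1 := by
      rintro rfl
      exact hi1 hp
    omega
  have := betaRow_add_card hB hi
  have := betaRow_add_card hB hp
  right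
  rw [← hpq]
  omega

lemma exists_isAddableCell_betaRow_iff (hB : B ⊆ Icc 1 m) {i : ℕ} (hi0 : 1 ≤ i) :
    (∃ q c, IsAddableCell (betaRow m B) q c ∧ resOf #B q c = i) ↔ i ∈ B ∧ i + 1 ∉ B := by
  constructor
  · rintro ⟨q, c, ⟨rfl, hq⟩, hres⟩
    have hqB : q < #B := by
      by_contra h
      rw [resOf, betaRow_eq_zero (not_lt.1 h)] at hres
      omega
    obtain ⟨p, hp, rfl⟩ := exists_numAbove_eq hqB
    obtain rfl : p = i := by exact_mod_cast (resOf_betaRow hB hp).symm.trans hres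
    refine ⟨hp, fun hi1 => ?_⟩
    have h1 := numAbove_of_succ_mem hi1
    have h2 := betaRow_add_card hB hi1
    have h3 := betaRow_add_card hB hp
    rcases hq with h0 | hlt
    · omega
    · rw [h1, Nat.add_sub_cancel] at hlt
      rw [h1] at h3
      omega
  · rintro ⟨hi, hi1⟩
    exact ⟨_, _, isAddableCell_betaRow hB hi hi1, resOf_betaRow hB hi⟩

lemma isRemovableCell_betaRow (hB : B ⊆ Icc 1 m) {i : ℕ} (hi0 : 1 ≤ i) (hi : i ∉ B)
    (hi1 : i + 1 ∈ B) :
    IsRemovableCell (betaRow m B) (numAbove B (i + 1)) (betaRow m B (numAbove B (i + 1)) - 1) := by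
  have hrow := betaRow_add_card hB hi1
  have hsplit := card_eq_card_filter_lt_add_numAbove hi1
  have hbelow : #(B.filter (· < i + 1)) ≤ i - 1 := by
    calc #(B.filter (· < i + 1)) ≤ #(Ico 1 i) := card_le_card fun x hx => ?_
      _ = i - 1 := Nat.card_Ico 1 i
    obtain ⟨hxB, hxi⟩ := mem_filter.1 hx
    have : x ≠ i := by
      rintro rfl
      exact hi hxB
    exact mem_Ico.2 ⟨(mem_Icc.1 (hB hxB)).1, by omega⟩
  refine ⟨by omega, ?_⟩
  rcases lt_or_ge (numAbove B (i + 1) + 1) #B with hlt | hge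
  · obtain ⟨p, hp, hpq⟩ := exists_numAbove_eq hlt
    have hpi : p < i := by
      have : p < i + 1 := (numAbove_antitone B).reflect_lt (by omega)
      have : p ≠ i := by
        rintro rfl
        exact hi hp
      omega
    have := betaRow_add_card hB hp
    rw [← hpq]
    omega
  · rw [betaRow_eq_zero hge]
    omega

lemma exists_isRemovableCell_betaRow_iff (hB : B ⊆ Icc 1 m) {i : ℕ} (hi0 : 1 ≤ i) :
    (∃ q c, IsRemovableCell (betaRow m B) q c ∧ resOf #B q c = i) ↔ i ∉ B ∧ i + 1 ∈ B := by
  constructor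
  · rintro ⟨q, c, ⟨hc, hlt⟩, hres⟩
    have hqB : q < #B := by
      by_contra h
      rw [betaRow_eq_zero (not_lt.1 h)] at hlt
      omega
    obtain ⟨p, hp, rfl⟩ := exists_numAbove_eq hqB
    have h := resOf_betaRow hB hp
    obtain rfl : p = i + 1 := by
      simp only [resOf] at h hres
      omega
    refine ⟨fun hiB => ?_, hp⟩
    have h1 := numAbove_of_succ_mem hp
    have h2 := betaRow_add_card hB hiB
    have h3 := betaRow_add_card hB hp
    rw [h1] at h2
    omega
  · rintro ⟨hi, hi1⟩
    have hc := (isRemovableCell_betaRow hB hi0 hi hi1).1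
    have hres := resOf_betaRow hB hi1
    refine ⟨_, _, isRemovableCell_betaRow hB hi0 hi hi1, ?_⟩
    simp only [resOf] at hres ⊢
    omega

lemma numAbove_swap {i : ℕ} (hi : i ∈ B) (hi1 : i + 1 ∉ B) (x : ℕ) :
    numAbove (insert (i + 1) (B.erase i)) x = numAbove B x + if x = i then 1 else 0 := by
  have hi1' : i + 1 ∉ (B.filter (x < ·)).erase i := by simp [hi1]
  unfold numAbove
  rw [filter_insert, filter_erase]
  rcases lt_trichotomy x i with h | rfl | h
  · have hmem : i ∈ B.filter (x < ·) := mem_filter.2 ⟨hi, h⟩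
    rw [if_pos (by omega), if_neg (by omega), card_insert_of_notMem hi1',
      card_erase_add_one hmem, add_zero]
  · rw [if_pos (by omega), if_pos rfl, card_insert_of_notMem hi1', erase_eq_of_notMem (by simp)]
  · rw [if_neg (by omega), if_neg (by omega), add_zero,
      erase_eq_of_notMem fun h' => lt_asymm h (mem_filter.1 h').2]

lemma betaRow_swap (hB : B ⊆ Icc 1 m) {i : ℕ} (hi : i ∈ B) (hi1 : i + 1 ∉ B) (him : i + 1 ≤ m) :
    betaRow m (insert (i + 1) (B.erase i)) =
      Function.update (betaRow m B) (numAbove B i) (betaRow m B (numAbove B i) + 1) := by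
  funext q
  set B' := insert (i + 1) (B.erase i)
  have hi0 := (mem_Icc.1 (hB hi)).1
  have hcard : betaRow m B' q = betaRow m B q + if q = numAbove B i then 1 else 0 := by
    set F := (Icc 1 m).filter fun x => x ∉ B ∧ q < numAbove B x
    set F' := (Icc 1 m).filter fun x => x ∉ B' ∧ q < numAbove B' x
    have key : F'.erase i = F.erase (i + 1) := by
      ext x
      simp only [F, F', B', mem_erase, mem_filter, mem_insert, numAbove_swap hi hi1]
      by_cases h1 : x = i
      · subst h1
        simp [hi]
      by_cases h2 : x = i + 1
      · subst h2
        simp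
      simp [h1, h2]
    have hF' : i ∈ F' ↔ q ≤ numAbove B i := by
      have hiB' : i ∉ B' := by simp [B']
      rw [mem_filter, numAbove_swap hi hi1, if_pos rfl, Nat.lt_succ_iff]
      exact ⟨fun h => h.2.2, fun h => ⟨mem_Icc.2 ⟨hi0, by omega⟩, hiB', h⟩⟩
    have hF : i + 1 ∈ F ↔ q < numAbove B i := by
      simp [F, hi1, numAbove_of_succ_not_mem hi1, him]
    change #F' = #F + _
    rw [card_eq_card_erase_add_ite F' i, card_eq_card_erase_add_ite F (i + 1), key]
    simp only [hF, hF']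
    split_ifs <;> omega
  rw [hcard, Function.update_apply]
  split_ifs with hq
  · rw [hq]
  · rfl

lemma addRes_betaRow (hB : B ⊆ Icc 1 m) {i : ℕ} (hi : i ∈ B) (hi1 : i + 1 ∉ B) :
    addRes #B (betaRow m B) i =
      Function.update (betaRow m B) (numAbove B i) (betaRow m B (numAbove B i) + 1) := by
  have h := addRes_eq_update (ℓ := #B) (betaRow_antitone m B) (isAddableCell_betaRow hB hi hi1).2
  have hres : (betaRow m B (numAbove B i) : ℤ) - numAbove B i + #B = i := resOf_betaRow hB hi
  rwa [hres] at h

end BetaSet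

section Flow

variable {n ℓ m s : ℕ} {P : LadderPresentation n ℓ m s} (f : LadderFlow P)

def betaSet (r : Fin (s + 1)) (t : ℕ) : Finset ℕ := (Icc 1 m).filter (t ∈ f.S r ·)

lemma betaSet_subset (r : Fin (s + 1)) (t : ℕ) : betaSet f r t ⊆ Icc 1 m := filter_subset _ _

lemma mem_betaSet_iff {r : Fin (s + 1)} {t p : ℕ} (hp : p ∈ Icc 1 m) :
    p ∈ betaSet f r t ↔ t ∈ f.S r p := by
  simp [betaSet, hp]

lemma res_mem_Icc (r : Fin s) : P.res r ∈ Icc 1 m :=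
  mem_Icc.2 ⟨P.res_pos r, (P.res_lt r).le⟩

lemma res_add_one_mem_Icc (r : Fin s) : P.res r + 1 ∈ Icc 1 m :=
  mem_Icc.2 ⟨by omega, P.res_lt r⟩

lemma T_subset_Icc (r : Fin s) : f.T r ⊆ Icc 1 n := fun _ ht => f.S_sub _ _ (f.T_sub r ht)

lemma res_mem_betaSet {r : Fin s} {t : ℕ} (ht : t ∈ f.T r) :
    P.res r ∈ betaSet f r.castSucc t :=
  (mem_betaSet_iff f (res_mem_Icc r)).2 (f.T_sub r ht)

lemma res_add_one_not_mem_betaSet {r : Fin s} {t : ℕ} (ht : t ∈ f.T r) :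
    P.res r + 1 ∉ betaSet f r.castSucc t := fun h =>
  disjoint_left.1 (f.T_disj r) ht ((mem_betaSet_iff f (res_add_one_mem_Icc r)).1 h)

lemma mem_S_succ_of_mem {r : Fin s} {t : ℕ} (ht : t ∈ f.T r) (p : ℕ) :
    t ∈ f.S r.succ p ↔ p = P.res r + 1 ∨ p ≠ P.res r ∧ t ∈ f.S r.castSucc p := by
  by_cases h0 : p = P.res r
  · subst h0
    simp [f.S_step_res, ht]
  by_cases h1 : p = P.res r + 1
  · subst h1
    simp [f.S_step_res1, ht]
  simp [f.S_step_other r p h0 h1, h0, h1]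

lemma mem_S_succ_of_not_mem {r : Fin s} {t : ℕ} (ht : t ∉ f.T r) (p : ℕ) :
    t ∈ f.S r.succ p ↔ t ∈ f.S r.castSucc p := by
  by_cases h0 : p = P.res r
  · subst h0
    simp [f.S_step_res, ht]
  by_cases h1 : p = P.res r + 1
  · subst h1
    simp [f.S_step_res1, ht]
  rw [f.S_step_other r p h0 h1]

lemma betaSet_succ_of_mem {r : Fin s} {t : ℕ} (ht : t ∈ f.T r) :
    betaSet f r.succ t = insert (P.res r + 1) ((betaSet f r.castSucc t).erase (P.res r)) := by
  ext p
  simp only [betaSet, mem_filter, mem_insert, mem_erase, mem_S_succ_of_mem f ht]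
  constructor
  · tauto
  · rintro (rfl | ⟨hp, hpm, htp⟩)
    exacts [⟨res_add_one_mem_Icc r, Or.inl rfl⟩, ⟨hpm, Or.inr ⟨hp, htp⟩⟩]

lemma betaSet_succ_of_not_mem {r : Fin s} {t : ℕ} (ht : t ∉ f.T r) :
    betaSet f r.succ t = betaSet f r.castSucc t := by
  ext p
  simp only [betaSet, mem_filter, mem_S_succ_of_not_mem f ht]

lemma betaSet_zero (hℓm : ℓ ≤ m) {t : ℕ} (ht : t ∈ Icc 1 n) : betaSet f 0 t = Icc 1 ℓ := by
  ext p
  simp only [betaSet, mem_filter, mem_Icc]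
  constructor
  · rintro ⟨⟨hp1, hpm⟩, htS⟩
    rw [f.S_init p hp1 hpm] at htS
    split_ifs at htS with hpℓ
    · exact ⟨hp1, hpℓ⟩
    · simp at htS
  · rintro ⟨hp1, hpℓ⟩
    refine ⟨⟨hp1, hpℓ.trans hℓm⟩, ?_⟩
    rwa [f.S_init p hp1 (hpℓ.trans hℓm), if_pos hpℓ]

lemma card_betaSet (hℓm : ℓ ≤ m) {t : ℕ} (ht : t ∈ Icc 1 n) (r : Fin (s + 1)) :
    #(betaSet f r t) = ℓ := by
  induction r using Fin.induction with
  | zero => rw [betaSet_zero f hℓm ht, Nat.card_Icc, Nat.add_sub_cancel]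
  | succ r ih =>
    by_cases htT : t ∈ f.T r
    · have hpos := card_pos.2 ⟨_, res_mem_betaSet f htT⟩
      rw [betaSet_succ_of_mem f htT,
        card_insert_of_notMem fun h => res_add_one_not_mem_betaSet f htT (mem_of_mem_erase h),
        card_erase_of_mem (res_mem_betaSet f htT)]
      omega
    · rwa [betaSet_succ_of_not_mem f htT]

lemma iotaAux_succ (r : Fin s) :
    iotaAux P f ((r : ℕ) + 1) = stepAdd ℓ (P.res r) (r + 1) (f.T r) (iotaAux P f r) := by
  simp [iotaAux]

lemma iotaAux_succ_of_le {r : ℕ} (h : s ≤ r) : iotaAux P f (r + 1) = iotaAux P f r := by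
  simp [iotaAux, not_lt.2 h]

lemma shape_iotaAux_succ (r : Fin s) (t : ℕ) :
    (iotaAux P f ((r : ℕ) + 1)).shape t =
      if t ∈ f.T r then addRes ℓ ((iotaAux P f r).shape t) (P.res r) else (iotaAux P f r).shape t := by
  rw [iotaAux_succ]
  rfl

lemma entry_iotaAux_succ (r : Fin s) (t q c : ℕ) :
    (iotaAux P f ((r : ℕ) + 1)).entry t q c =
      if t ∈ f.T r ∧ (iotaAux P f r).shape t q ≤ c ∧
        c < addRes ℓ ((iotaAux P f r).shape t) (P.res r) q then (r : ℕ) + 1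
      else (iotaAux P f r).entry t q c := by
  rw [iotaAux_succ]
  rfl

lemma shape_iotaAux_succ_of_not_mem {r : Fin s} {t : ℕ} (ht : t ∉ f.T r) :
    (iotaAux P f ((r : ℕ) + 1)).shape t = (iotaAux P f r).shape t := by
  rw [shape_iotaAux_succ, if_neg ht]

lemma shape_iotaAux_mono (t q : ℕ) : Monotone fun r => (iotaAux P f r).shape t q := by
  refine monotone_nat_of_le_succ fun r => ?_
  rcases lt_or_ge r s with hr | hr
  · have h := shape_iotaAux_succ f ⟨r, hr⟩ t
    simp only at h ⊢
    rw [h]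
    split_ifs
    exacts [le_addRes _ _ _ _, le_rfl]
  · rw [iotaAux_succ_of_le f hr]

lemma shape_iotaAux (hℓm : ℓ ≤ m) {t : ℕ} (ht : t ∈ Icc 1 n) (r : Fin (s + 1)) :
    (iotaAux P f r).shape t = betaRow m (betaSet f r t) := by
  induction r using Fin.induction with
  | zero =>
    rw [betaSet_zero f hℓm ht, betaRow_Icc_one]
    rfl
  | succ r ih =>
    rw [Fin.val_castSucc] at ih
    rw [Fin.val_succ, shape_iotaAux_succ]
    split_ifs with htT
    · have hB := betaSet_subset f r.castSucc t
      have h := addRes_betaRow hB (res_mem_betaSet f htT) (res_add_one_not_mem_betaSet f htT)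
      rw [card_betaSet f hℓm ht] at h
      rw [ih, h, betaSet_succ_of_mem f htT,
        betaRow_swap hB (res_mem_betaSet f htT) (res_add_one_not_mem_betaSet f htT)
          (P.res_lt r)]
    · rw [betaSet_succ_of_not_mem f htT]
      exact ih

def addedRow (r : Fin s) (t : ℕ) : ℕ := numAbove (betaSet f r.castSucc t) (P.res r)

lemma shape_iotaAux_castSucc (hℓm : ℓ ≤ m) {t : ℕ} (ht : t ∈ Icc 1 n) (r : Fin s) :
    (iotaAux P f r).shape t = betaRow m (betaSet f r.castSucc t) :=
  shape_iotaAux f hℓm ht r.castSucc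

lemma shape_iotaAux_succ_eq_betaRow (hℓm : ℓ ≤ m) {t : ℕ} (ht : t ∈ Icc 1 n) (r : Fin s) :
    (iotaAux P f ((r : ℕ) + 1)).shape t = betaRow m (betaSet f r.succ t) :=
  shape_iotaAux f hℓm ht r.succ

lemma shape_iotaAux_succ_of_mem (hℓm : ℓ ≤ m) {r : Fin s} {t : ℕ} (ht : t ∈ f.T r) :
    (iotaAux P f ((r : ℕ) + 1)).shape t = Function.update ((iotaAux P f r).shape t)
      (addedRow f r t) ((iotaAux P f r).shape t (addedRow f r t) + 1) := by
  have h := addRes_betaRow (betaSet_subset f r.castSucc t) (res_mem_betaSet f ht)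
    (res_add_one_not_mem_betaSet f ht)
  rw [card_betaSet f hℓm (T_subset_Icc f r ht)] at h
  rw [shape_iotaAux_succ, if_pos ht, shape_iotaAux_castSucc f hℓm (T_subset_Icc f r ht), h]
  rfl

lemma resOf_addedRow (hℓm : ℓ ≤ m) {r : Fin s} {t : ℕ} (ht : t ∈ f.T r) :
    resOf ℓ (addedRow f r t) ((iotaAux P f r).shape t (addedRow f r t)) = P.res r := by
  have h := resOf_betaRow (betaSet_subset f r.castSucc t) (res_mem_betaSet f ht)
  rwa [card_betaSet f hℓm (T_subset_Icc f r ht),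
    ← shape_iotaAux_castSucc f hℓm (T_subset_Icc f r ht)] at h

lemma new_cell_iff (hℓm : ℓ ≤ m) {r : Fin s} {t q c : ℕ} (ht : t ∈ f.T r) :
    ((iotaAux P f r).shape t q ≤ c ∧ c < (iotaAux P f ((r : ℕ) + 1)).shape t q) ↔
      q = addedRow f r t ∧ c = (iotaAux P f r).shape t (addedRow f r t) := by
  rw [shape_iotaAux_succ_of_mem f hℓm ht]
  rcases eq_or_ne q (addedRow f r t) with rfl | hq
  · simp only [Function.update_self, true_and]
    omega
  · simp only [Function.update_of_ne hq, hq, false_and, iff_false]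
    omega

lemma entry_iotaAux_le_iff {r t q c : ℕ} (hc : c < (iotaAux P f r).shape t q) (k : ℕ) :
    (iotaAux P f r).entry t q c ≤ k ↔ c < (iotaAux P f k).shape t q := by
  induction r with
  | zero => exact absurd hc (Nat.not_lt_zero c)
  | succ r ih =>
    rcases lt_or_ge r s with hr | hr
    · have hs := shape_iotaAux_succ f ⟨r, hr⟩ t
      have he := entry_iotaAux_succ f ⟨r, hr⟩ t q c
      simp only at hs he
      by_cases hcr : c < (iotaAux P f r).shape t q
      · rw [he, if_neg fun h => absurd h.2.1 (not_le.2 hcr), ih hcr]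
      have hnew : t ∈ f.T ⟨r, hr⟩ ∧ (iotaAux P f r).shape t q ≤ c ∧
          c < addRes ℓ ((iotaAux P f r).shape t) (P.res ⟨r, hr⟩) q := by
        by_cases htT : t ∈ f.T ⟨r, hr⟩
        · rw [hs, if_pos htT] at hc
          exact ⟨htT, not_lt.1 hcr, hc⟩
        · rw [hs, if_neg htT] at hc
          exact absurd hc hcr
      rw [he, if_pos hnew]
      constructor
      · exact fun hk => hc.trans_le (shape_iotaAux_mono f t q hk)
      · intro hk
        by_contra hk'
        exact hcr (hk.trans_le (shape_iotaAux_mono f t q (by omega)))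
    · rw [iotaAux_succ_of_le f hr] at hc ⊢
      exact ih hc

lemma entry_iotaAux_eq_iff {r t q c j : ℕ} (hc : c < (iotaAux P f r).shape t q) (hj : 1 ≤ j) :
    (iotaAux P f r).entry t q c = j ↔
      (iotaAux P f (j - 1)).shape t q ≤ c ∧ c < (iotaAux P f j).shape t q := by
  rw [← not_lt, ← entry_iotaAux_le_iff f hc, ← entry_iotaAux_le_iff f hc]
  omega

lemma entry_iotaMap_eq_succ_iff (r : Fin s) {t q c : ℕ} :
    (InDiag ((iotaMap P f).shape t) q c ∧ (iotaMap P f).entry t q c = (r : ℕ) + 1) ↔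
      (iotaAux P f r).shape t q ≤ c ∧ c < (iotaAux P f ((r : ℕ) + 1)).shape t q := by
  constructor
  · rintro ⟨hc, he⟩
    exact (entry_iotaAux_eq_iff f hc (by omega)).1 he
  · intro h
    have hc : c < (iotaMap P f).shape t q := h.2.trans_le (shape_iotaAux_mono f t q r.isLt)
    exact ⟨hc, (entry_iotaAux_eq_iff f hc (by omega)).2 h⟩

lemma exists_entry_iotaMap_iff (hℓm : ℓ ≤ m) (r : Fin s) (t : ℕ) :
    (∃ q c, InDiag ((iotaMap P f).shape t) q c ∧ (iotaMap P f).entry t q c = (r : ℕ) + 1) ↔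
      t ∈ f.T r := by
  simp only [entry_iotaMap_eq_succ_iff]
  constructor
  · rintro ⟨q, c, hle, hlt⟩
    by_contra htT
    rw [shape_iotaAux_succ_of_not_mem f htT] at hlt
    omega
  · exact fun ht => ⟨_, _, (new_cell_iff f hℓm ht).2 ⟨rfl, rfl⟩⟩

lemma compsWith_iotaMap (hℓm : ℓ ≤ m) (r : Fin s) :
    compsWith n (iotaMap P f) ((r : ℕ) + 1) = f.T r := by
  ext t
  rw [compsWith, mem_filter, exists_entry_iotaMap_iff f hℓm]
  exact ⟨And.right, fun ht => ⟨T_subset_Icc f r ht, ht⟩⟩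

lemma nodeRow_nodeCol_iotaMap (hℓm : ℓ ≤ m) {r : Fin s} {t : ℕ} (ht : t ∈ f.T r) :
    nodeRow (iotaMap P f) ((r : ℕ) + 1) t = addedRow f r t ∧
      nodeCol (iotaMap P f) ((r : ℕ) + 1) t = (iotaAux P f r).shape t (addedRow f r t) := by
  have hex := (exists_entry_iotaMap_iff f hℓm r t).2 ht
  rw [nodeRow, nodeCol, dif_pos hex, dif_pos hex]
  exact (new_cell_iff f hℓm ht).1 ((entry_iotaMap_eq_succ_iff f r).1 hex.choose_spec.choose_spec)

lemma card_filter_entry_iotaMap_le {k : ℕ} (hk : k ≤ s) (t q : ℕ) :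
    #((range ((iotaMap P f).shape t q)).filter fun c => (iotaMap P f).entry t q c ≤ k) =
      (iotaAux P f k).shape t q := by
  unfold iotaMap
  rw [filter_congr fun c hc => entry_iotaAux_le_iff f (mem_range.1 hc) k]
  have hle : (iotaAux P f k).shape t q ≤ (iotaAux P f s).shape t q :=
    shape_iotaAux_mono f t q hk
  have : (range ((iotaAux P f s).shape t q)).filter (· < (iotaAux P f k).shape t q) =
      range ((iotaAux P f k).shape t q) := by
    ext c
    simp only [mem_filter, mem_range]
    omega
  rw [this, card_range]

lemma shapeTrunc_iotaMap (r : Fin s) (Keep : Finset ℕ) (t : ℕ) :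
    shapeTrunc (iotaMap P f) ((r : ℕ) + 1) Keep t =
      (iotaAux P f (if t ∈ Keep then (r : ℕ) + 1 else r)).shape t := by
  funext q
  rw [shapeTrunc, Nat.add_sub_cancel]
  split_ifs
  · exact card_filter_entry_iotaMap_le f r.isLt t q
  · exact card_filter_entry_iotaMap_le f r.isLt.le t q

lemma exists_addable_shape_iotaAux_iff (hℓm : ℓ ≤ m) (r : Fin s) {t : ℕ} (ht : t ∈ Icc 1 n) :
    (∃ q c, IsAddableCell ((iotaAux P f r).shape t) q c ∧ resOf ℓ q c = P.res r) ↔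
      t ∈ f.S r.castSucc (P.res r) ∧ t ∉ f.S r.castSucc (P.res r + 1) := by
  have h := exists_isAddableCell_betaRow_iff (betaSet_subset f r.castSucc t) (P.res_pos r)
  rwa [card_betaSet f hℓm ht, ← shape_iotaAux_castSucc f hℓm ht,
    mem_betaSet_iff f (res_mem_Icc r), mem_betaSet_iff f (res_add_one_mem_Icc r)] at h

lemma exists_removable_shape_iotaAux_iff (hℓm : ℓ ≤ m) (r : Fin s) {t : ℕ} (ht : t ∈ Icc 1 n) :
    (∃ q c, IsRemovableCell ((iotaAux P f r).shape t) q c ∧ resOf ℓ q c = P.res r) ↔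
      t ∉ f.S r.castSucc (P.res r) ∧ t ∈ f.S r.castSucc (P.res r + 1) := by
  have h := exists_isRemovableCell_betaRow_iff (betaSet_subset f r.castSucc t) (P.res_pos r)
  rwa [card_betaSet f hℓm ht, ← shape_iotaAux_castSucc f hℓm ht,
    mem_betaSet_iff f (res_mem_Icc r), mem_betaSet_iff f (res_add_one_mem_Icc r)] at h

lemma not_exists_addable_shape_iotaAux_succ (hℓm : ℓ ≤ m) {r : Fin s} {t : ℕ}
    (ht : t ∈ f.T r) :
    ¬ ∃ q c, IsAddableCell ((iotaAux P f ((r : ℕ) + 1)).shape t) q c ∧ resOf ℓ q c = P.res r := by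
  have htn := T_subset_Icc f r ht
  have h := exists_isAddableCell_betaRow_iff (betaSet_subset f r.succ t) (P.res_pos r)
  rw [card_betaSet f hℓm htn] at h
  rw [shape_iotaAux_succ_eq_betaRow f hℓm htn, h, betaSet_succ_of_mem f ht]
  simp

lemma eq_addedRow_of_isRemovableCell (hℓm : ℓ ≤ m) {r : Fin s} {t q c : ℕ} (ht : t ∈ f.T r)
    (hrem : IsRemovableCell ((iotaAux P f ((r : ℕ) + 1)).shape t) q c)
    (hres : resOf ℓ q c = P.res r) : q = addedRow f r t := by
  have htn := T_subset_Icc f r ht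
  have hanti : Antitone ((iotaAux P f ((r : ℕ) + 1)).shape t) := by
    rw [shape_iotaAux_succ_eq_betaRow f hℓm htn]
    exact betaRow_antitone _ _
  have hadded := resOf_addedRow f hℓm ht
  have hsucc := congrFun (shape_iotaAux_succ_of_mem f hℓm ht) (addedRow f r t)
  rw [Function.update_self] at hsucc
  refine injective_sub_self_of_antitone hanti ?_
  simp only [resOf] at hres hadded
  simp only [← hrem.1, hsucc]
  push_cast
  omega

lemma cntAddAfter_iotaMap (hℓm : ℓ ≤ m) {r : Fin s} {t : ℕ} (ht : t ∈ f.T r) :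
    cntAddAfter n ℓ (shapeTrunc (iotaMap P f) ((r : ℕ) + 1) ((f.T r).filter (t ≤ ·)))
        (P.res r) t (addedRow f r t) =
      #((f.S r.castSucc (P.res r) \ f.S r.castSucc (P.res r + 1)).filter (· < t)) := by
  unfold cntAddAfter
  congr 1
  ext t'
  simp only [mem_filter, mem_sdiff, shapeTrunc_iotaMap]
  constructor
  · rintro ⟨ht', q, c, hadd, hres, hlt | ⟨rfl, -⟩⟩
    · rw [if_neg (not_and_of_not_right _ hlt.not_ge)] at hadd
      exact ⟨(exists_addable_shape_iotaAux_iff f hℓm r ht').1 ⟨q, c, hadd, hres⟩, hlt⟩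
    · rw [if_pos (by simp [ht])] at hadd
      exact absurd ⟨q, c, hadd, hres⟩ (not_exists_addable_shape_iotaAux_succ f hℓm ht)
  · rintro ⟨hXY, hlt⟩
    have ht' : t' ∈ Icc 1 n := f.S_sub _ _ hXY.1
    obtain ⟨q, c, hadd, hres⟩ := (exists_addable_shape_iotaAux_iff f hℓm r ht').2 hXY
    refine ⟨ht', q, c, ?_, hres, Or.inl hlt⟩
    rwa [if_neg (not_and_of_not_right _ hlt.not_ge)]

lemma cntRemAfter_iotaMap (hℓm : ℓ ≤ m) {r : Fin s} {t : ℕ} (ht : t ∈ f.T r) :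
    cntRemAfter n ℓ (shapeTrunc (iotaMap P f) ((r : ℕ) + 1) ((f.T r).filter (t ≤ ·)))
        (P.res r) t (addedRow f r t) =
      #((f.S r.castSucc (P.res r + 1) \ f.S r.castSucc (P.res r)).filter (· < t)) := by
  unfold cntRemAfter
  congr 1
  ext t'
  simp only [mem_filter, mem_sdiff, shapeTrunc_iotaMap]
  constructor
  · rintro ⟨ht', q, c, hrem, hres, hlt | ⟨rfl, hq⟩⟩
    · rw [if_neg (not_and_of_not_right _ hlt.not_ge)] at hrem
      exact ⟨((exists_removable_shape_iotaAux_iff f hℓm r ht').1 ⟨q, c, hrem, hres⟩).symm, hlt⟩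
    · rw [if_pos (by simp [ht])] at hrem
      have := eq_addedRow_of_isRemovableCell f hℓm ht hrem hres
      omega
  · rintro ⟨hYX, hlt⟩
    have ht' : t' ∈ Icc 1 n := f.S_sub _ _ hYX.1
    obtain ⟨q, c, hrem, hres⟩ := (exists_removable_shape_iotaAux_iff f hℓm r ht').2 hYX.symm
    refine ⟨ht', q, c, ?_, hres, Or.inl hlt⟩
    rwa [if_neg (not_and_of_not_right _ hlt.not_ge)]

lemma degStep_iotaMap (hℓm : ℓ ≤ m) (r : Fin s) :
    degStep n ℓ (iotaMap P f) ((r : ℕ) + 1) =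
      inv2 (f.S r.succ (P.res r)) (f.T r) - inv2 (f.S r.castSucc (P.res r + 1)) (f.T r) := by
  rw [degStep, compsWith_iotaMap f hℓm r, f.S_step_res, inv2_eq_sum, inv2_eq_sum,
    ← Nat.choose_two_right, ← sum_card_filter_lt]
  push_cast
  rw [← sum_sub_distrib, ← sum_sub_distrib]
  refine sum_congr rfl fun t ht => ?_
  obtain ⟨hrow, hcol⟩ := nodeRow_nodeCol_iotaMap f hℓm ht
  rw [hrow, hcol, resOf_addedRow f hℓm ht, cntAddAfter_iotaMap f hℓm ht,
    cntRemAfter_iotaMap f hℓm ht, card_filter_sdiff_sub_card_filter_sdiff]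
  have hsplit := card_sdiff_add_card_eq_card (filter_subset_filter (· < t) (f.T_sub r))
  rw [← filter_sdiff_eq] at hsplit
  omega

end Flow

theorem degBKW_iota_eq_wtFlow_general (n ℓ m : ℕ) (hm : ℓ + 1 ≤ m) (s : ℕ)
    (P : LadderPresentation n ℓ m s) (f : LadderFlow P) :
    degBKW n ℓ s (iotaMap P f) = wtFlow P f := by
  rw [degBKW, wtFlow, sum_Icc_one_eq_sum_fin]
  exact sum_congr rfl fun r _ => degStep_iotaMap f (by omega) r

theorem degBKW_iota_eq_wtFlow (n ℓ m : ℕ) (hn : 2 ≤ n) (hℓ : 1 ≤ ℓ)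
    (hm : ℓ + 1 ≤ m) (s : ℕ) (P : LadderPresentation n ℓ m s) (hP : IsValid P)
    (f : LadderFlow P) :
    degBKW n ℓ s (iotaMap P f) = wtFlow P f :=
  degBKW_iota_eq_wtFlow_general n ℓ m hm s P f

end

end SlnWeb
end

section
/- Quantum Serre relations imply invariance under the second Reidemeister move. Let K be a field and q ∈ K with q ≠ 0 and q² + 1 ≠ 0. Let A be an associative unital K-algebra containing elements x, y, z satisfying the quantum Serre relations y²x − (q + q^{−1})·yxy + xy² = 0 and y²z − (q + q^{−1})·yzy + zy² = 0. Let M be a left A-module and v ∈ M with y²·v = 0 and y²zx·v = 0. Then zy²x·v = q·(yzyx)·v + q^{−1}·(zyxy)·v; equivalently, (yz − q^{−1}·zy)·(xy − q·yx)·v = (yzxy)·v. (With x = F_i, y = F_{i+1}, z = F_{i+2} acting on the highest-weight-module vector v = v_{…,1,1,0,0,…}, this identity is exactly the statement that the composite of a positive and a negative braiding operator equals the identity braiding, i.e., invariance of the evaluation of oriented colored link diagrams under the second Reidemeister move in the uncolored case.) -/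
/-!
STATEMENT 10: The quantum Serre relations imply invariance under the second
Reidemeister move.  With `x = F_i`, `y = F_{i+1}`, `z = F_{i+2}` acting on the
highest-weight vector `v = v_{…,1,1,0,0,…}`, the identity below is exactly the
statement that the composite of a positive and a negative braiding operator
equals the identity braiding.
-/

namespace Stmt10

theorem reidemeister_two_of_quantum_serre
    (K : Type*) [Field K] (q : K) (hq : q ≠ 0) (hq2 : q ^ 2 + 1 ≠ 0)
    (A : Type*) [Ring A] [Algebra K A] (x y z : A)
    (hserre_x : y ^ 2 * x - algebraMap K A (q + q⁻¹) * (y * x * y) + x * y ^ 2 = 0)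
    (hserre_z : y ^ 2 * z - algebraMap K A (q + q⁻¹) * (y * z * y) + z * y ^ 2 = 0)
    (M : Type*) [AddCommGroup M] [Module A M] (v : M)
    (hv1 : (y ^ 2) • v = 0) (hv2 : (y ^ 2 * z * x) • v = 0) :
    (z * y ^ 2 * x) • v =
        (algebraMap K A q * (y * z * y * x)) • v +
          (algebraMap K A q⁻¹ * (z * y * x * y)) • v ∧
      ((y * z - algebraMap K A q⁻¹ * (z * y)) *
          (x * y - algebraMap K A q * (y * x))) • v =
        (y * z * x * y) • v := by
  set c : K := q + q⁻¹ with hc_def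
  have hc : c ≠ 0 := by
    intro h
    apply hq2
    rw [hc_def] at h
    field_simp at h
    linear_combination h
  have hx : y ^ 2 * x + x * y ^ 2 = algebraMap K A c * (y * x * y) := by
    have h := hserre_x
    rw [sub_add_eq_add_sub, sub_eq_zero] at h
    exact h
  have hz : y ^ 2 * z + z * y ^ 2 = algebraMap K A c * (y * z * y) := by
    have h := hserre_z
    rw [sub_add_eq_add_sub, sub_eq_zero] at h
    exact h
  set w : M := (z * y ^ 2 * x) • v with hw_def
  have h1 : (algebraMap K A c * (y * z * y * x)) • v = w := by
    have e : algebraMap K A c * (y * z * y * x) = y ^ 2 * z * x + z * y ^ 2 * x := by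
      calc algebraMap K A c * (y * z * y * x)
          = (algebraMap K A c * (y * z * y)) * x := by noncomm_ring
        _ = (y ^ 2 * z + z * y ^ 2) * x := by rw [← hz]
        _ = y ^ 2 * z * x + z * y ^ 2 * x := by noncomm_ring
    rw [e, add_smul, hv2, zero_add]
  have h2 : (algebraMap K A c * (z * y * x * y)) • v = w := by
    have e : algebraMap K A c * (z * y * x * y)
        = z * y ^ 2 * x + z * x * y ^ 2 := by
      calc algebraMap K A c * (z * y * x * y)
          = z * (algebraMap K A c * (y * x * y)) := by
            simp only [Algebra.commutes]; noncomm_ring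
        _ = z * (y ^ 2 * x + x * y ^ 2) := by rw [← hx]
        _ = z * y ^ 2 * x + z * x * y ^ 2 := by noncomm_ring
    have h0 : (z * x * y ^ 2) • v = 0 := by rw [mul_smul, hv1, smul_zero]
    rw [e, add_smul, h0, add_zero]
  have key : ∀ (s : K) (P : A), (algebraMap K A c * P) • v = w →
      (algebraMap K A s * P) • v = algebraMap K A (s * c⁻¹) • w := by
    intro s P hP
    have hsc : algebraMap K A (s * c⁻¹) * algebraMap K A c = algebraMap K A s := by
      rw [← map_mul]
      congr 1
      field_simp
    calc (algebraMap K A s * P) • v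
        = (algebraMap K A (s * c⁻¹) * (algebraMap K A c * P)) • v := by
          congr 1
          rw [← hsc, mul_assoc]
      _ = algebraMap K A (s * c⁻¹) • (algebraMap K A c * P) • v := mul_smul _ _ _
      _ = algebraMap K A (s * c⁻¹) • w := by rw [hP]
  have hsum : (algebraMap K A q * (y * z * y * x)) • v
      + (algebraMap K A q⁻¹ * (z * y * x * y)) • v = w := by
    rw [key q _ h1, key q⁻¹ _ h2, ← add_smul, ← map_add]
    have e : q * c⁻¹ + q⁻¹ * c⁻¹ = 1 := by
      rw [← add_mul, ← hc_def, mul_inv_cancel₀ hc]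
    rw [e, map_one, one_smul]
  constructor
  · exact hsum.symm
  · have hexp : (y * z - algebraMap K A q⁻¹ * (z * y)) *
        (x * y - algebraMap K A q * (y * x)) =
        y * z * x * y - algebraMap K A q * (y * z * y * x)
          - algebraMap K A q⁻¹ * (z * y * x * y) + z * y ^ 2 * x := by
      simp only [← Algebra.smul_def, mul_sub, sub_mul, smul_mul_assoc, mul_smul_comm,
        smul_sub, smul_smul, inv_mul_cancel₀ hq, mul_inv_cancel₀ hq, one_smul,
        pow_two, mul_assoc]
      abel
    rw [hexp, add_smul, sub_smul, sub_smul, sub_sub, hsum]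
    abel

end Stmt10
end
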